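/- arXiv:2007.06075 — 4 statements merged into one kernel-verified Lean document; each statement's English description precedes it below -/
import Mathlib

section
/- Let d ≥ 1, let M be an invertible d×d real matrix, and let f_1, …, f_d : ℝ → ℝ be differentiable functions with f_i(s) > 0 for all s ∈ ℝ. Let Λ : ℝ^d → ℝ^{d×d} be given by the diagonal matrix Λ(y) with entries Λ(y)_{ii} = f_i(y_i), and define σ : ℝ^d → ℝ^{d×d} by σ(y) = M · Λ(M^{-1} y) · Mᵀ. Then σ is differentiable, σ(y) is invertible for every y ∈ ℝ^d, and σ satisfies the curl condition. -/
open Matrix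

/-- The entrywise partial derivative of a matrix field `σ : ℝ^d → ℝ^{d×d}`
at `y` in the coordinate direction `e_k`. -/
noncomputable def matPartialDeriv {d : ℕ} (σ : (Fin d → ℝ) → Matrix (Fin d) (Fin d) ℝ)
    (y : Fin d → ℝ) (k : Fin d) : Matrix (Fin d) (Fin d) ℝ :=
  Matrix.of fun i l => fderiv ℝ (fun y => σ y i l) y (Pi.single k 1)

/-- The curl condition: for all `y`, `j`, `k`,
`(∂σ/∂y_k)(y) · σ(y)⁻¹ · e_j = (∂σ/∂y_j)(y) · σ(y)⁻¹ · e_k`. -/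
def CurlCondition {d : ℕ} (σ : (Fin d → ℝ) → Matrix (Fin d) (Fin d) ℝ) : Prop :=
  ∀ (y : Fin d → ℝ) (j k : Fin d),
    (matPartialDeriv σ y k * (σ y)⁻¹) *ᵥ Pi.single j 1
      = (matPartialDeriv σ y j * (σ y)⁻¹) *ᵥ Pi.single k 1

/-! With `D(y) = diag(f_a((M⁻¹y)_a))` we have `σ = M D Mᵀ`, hence `∂_k σ = M D_k Mᵀ` where
`D_k = diag(f_a'((M⁻¹y)_a) (M⁻¹)_{ak})`, and `∂_k σ · σ⁻¹ = M diag(c_a (M⁻¹)_{ak}) M⁻¹` with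
`c_a = f_a'/f_a`. The `j`-th column of the latter has entries `∑_a M_{ia} c_a (M⁻¹)_{ak} (M⁻¹)_{aj}`,
which are symmetric in `j` and `k`. -/

section

variable {n R : Type*} [Fintype n] [DecidableEq n]

theorem mul_diagonal_mul_apply [CommSemiring R] (A B : Matrix n n R) (v : n → R) (i l : n) :
    (A * diagonal v * B) i l = ∑ a, A i a * v a * B a l := by
  rw [mul_apply]
  simp only [mul_diagonal]

theorem mul_diagonal_mul_mulVec_single_comm [CommSemiring R] (A P : Matrix n n R) (c : n → R)
    (j k : n) :
    (A * diagonal (fun a => c a * P a k) * P) *ᵥ Pi.single j 1 =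
      (A * diagonal (fun a => c a * P a j) * P) *ᵥ Pi.single k 1 := by
  ext i
  simp only [mulVec_single_one, col_apply, mul_diagonal_mul_apply]
  exact Finset.sum_congr rfl fun a _ => by ring

theorem isUnit_mul_diagonal_mul_transpose [CommRing R] {M : Matrix n n R} (hM : IsUnit M)
    {v : n → R} (hv : IsUnit v) : IsUnit (M * diagonal v * Mᵀ) :=
  (hM.mul (isUnit_diagonal.mpr hv)).mul (isUnit_transpose M |>.mpr hM)

theorem mul_diagonal_mul_transpose_mul_inv {K : Type*} [Field K] {M : Matrix n n K}
    (hM : IsUnit M) (u : n → K) {v : n → K} (hv : IsUnit v) :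
    M * diagonal u * Mᵀ * (M * diagonal v * Mᵀ)⁻¹ = M * diagonal (u / v) * M⁻¹ := by
  have hMT : IsUnit Mᵀ.det := by rwa [det_transpose, ← isUnit_iff_isUnit_det]
  have hD : (diagonal v)⁻¹ = diagonal v⁻¹ :=
    inv_eq_right_inv (by rw [diagonal_mul_diagonal, ← Pi.mul_def, hv.mul_inv_cancel, Pi.one_def,
      diagonal_one])
  rw [Matrix.mul_inv_rev, Matrix.mul_inv_rev, hD, div_eq_mul_inv, Pi.mul_def,
    ← diagonal_mul_diagonal]
  simp only [Matrix.mul_assoc, mul_nonsing_inv_cancel_left _ _ hMT]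

end

section

variable {𝕜 E m n : Type*} [NontriviallyNormedField 𝕜] [NormedAddCommGroup E] [NormedSpace 𝕜 E]

theorem hasFDerivAt_mul_diagonal_mul_apply [Fintype n] [DecidableEq n] {F : E → n → 𝕜}
    {F' : n → E →L[𝕜] 𝕜} {y : E}
    (hF : ∀ a, HasFDerivAt (fun y => F y a) (F' a) y) (A B : Matrix n n 𝕜) (i l : n) :
    HasFDerivAt (fun y => (A * diagonal (F y) * B) i l) (∑ a, (A i a * B a l) • F' a) y := by
  simp only [mul_diagonal_mul_apply]
  refine HasFDerivAt.fun_sum fun a _ => ?_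
  exact (((hF a).const_mul (A i a)).mul_const (B a l)).congr_fderiv (by rw [smul_smul, mul_comm])

theorem hasFDerivAt_comp_mulVec_apply [CompleteSpace 𝕜] [Fintype m] {g : 𝕜 → 𝕜}
    (N : Matrix n m 𝕜) (a : n) {y : m → 𝕜} (hg : DifferentiableAt 𝕜 g ((N *ᵥ y) a)) :
    HasFDerivAt (fun y => g ((N *ᵥ y) a))
      (deriv g ((N *ᵥ y) a) • ((LinearMap.proj a).comp N.mulVecLin).toContinuousLinearMap) y :=
  hg.hasDerivAt.comp_hasFDerivAt y (by
    exact ((LinearMap.proj a).comp N.mulVecLin).toContinuousLinearMap.hasFDerivAt)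

end

theorem matPartialDeriv_mul_diagonal_mul {d : ℕ} {F : (Fin d → ℝ) → Fin d → ℝ}
    {F' : Fin d → (Fin d → ℝ) →L[ℝ] ℝ} {y : Fin d → ℝ}
    (hF : ∀ a, HasFDerivAt (fun y => F y a) (F' a) y) (A B : Matrix (Fin d) (Fin d) ℝ) (k : Fin d) :
    matPartialDeriv (fun y => A * diagonal (F y) * B) y k =
      A * diagonal (fun a => F' a (Pi.single k 1)) * B := by
  ext i l
  rw [matPartialDeriv, of_apply, (hasFDerivAt_mul_diagonal_mul_apply hF A B i l).fderiv,
    mul_diagonal_mul_apply]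
  simp only [FunLike.coe_sum, Finset.sum_apply, FunLike.coe_smul, Pi.smul_apply, smul_eq_mul]
  exact Finset.sum_congr rfl fun a _ => by ring

theorem conjugated_diagonal_satisfies_curl_condition_general (d : ℕ)
    (M : Matrix (Fin d) (Fin d) ℝ) (hM : IsUnit M)
    (f : Fin d → ℝ → ℝ)
    (hf_diff : ∀ i, Differentiable ℝ (f i))
    (hf_pos : ∀ i s, 0 < f i s)
    (Λ : (Fin d → ℝ) → Matrix (Fin d) (Fin d) ℝ)
    (hΛ : ∀ y, Λ y = Matrix.diagonal fun i => f i (y i))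
    (σ : (Fin d → ℝ) → Matrix (Fin d) (Fin d) ℝ)
    (hσ : ∀ y, σ y = M * Λ (M⁻¹ *ᵥ y) * Mᵀ) :
    (∀ i j, Differentiable ℝ fun y => σ y i j) ∧
      (∀ y, IsUnit (σ y)) ∧
      CurlCondition σ := by
  obtain rfl : σ = fun y => M * diagonal (fun a => f a ((M⁻¹ *ᵥ y) a)) * Mᵀ :=
    funext fun y => by rw [hσ, hΛ]
  have hF (y : Fin d → ℝ) (a : Fin d) :=
    hasFDerivAt_comp_mulVec_apply M⁻¹ a (hf_diff a ((M⁻¹ *ᵥ y) a))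
  have hv (y : Fin d → ℝ) : IsUnit fun a => f a ((M⁻¹ *ᵥ y) a) :=
    Pi.isUnit_iff.mpr fun a => (hf_pos a _).ne'.isUnit
  refine ⟨fun i l y => (hasFDerivAt_mul_diagonal_mul_apply (hF y) M Mᵀ i l).differentiableAt,
    fun y => isUnit_mul_diagonal_mul_transpose hM (hv y), fun y j k => ?_⟩
  simp only [matPartialDeriv_mul_diagonal_mul (hF y), _root_.smul_apply,
    LinearMap.coe_toContinuousLinearMap', LinearMap.comp_apply, LinearMap.proj_apply,
    mulVecLin_apply, mulVec_single_one (M := M⁻¹),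
    col_apply, smul_eq_mul, mul_diagonal_mul_transpose_mul_inv hM _ (hv y), Pi.div_def,
    mul_div_right_comm]
  exact mul_diagonal_mul_mulVec_single_comm _ _ _ _ _

/-- Lemma 1 (iii): if `M` is an invertible `d×d` matrix,
`Λ(y)` is the diagonal matrix with entries `f_i(y_i)` for differentiable positive
functions `f_i`, and `σ(y) = M · Λ(M⁻¹ y) · Mᵀ`, then `σ` is differentiable,
`σ(y)` is invertible for every `y`, and `σ` satisfies the curl condition. -/
theorem conjugated_diagonal_satisfies_curl_condition (d : ℕ) (hd : 1 ≤ d)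
    (M : Matrix (Fin d) (Fin d) ℝ) (hM : IsUnit M)
    (f : Fin d → ℝ → ℝ)
    (hf_diff : ∀ i, Differentiable ℝ (f i))
    (hf_pos : ∀ i s, 0 < f i s)
    (Λ : (Fin d → ℝ) → Matrix (Fin d) (Fin d) ℝ)
    (hΛ : ∀ y, Λ y = Matrix.diagonal fun i => f i (y i))
    (σ : (Fin d → ℝ) → Matrix (Fin d) (Fin d) ℝ)
    (hσ : ∀ y, σ y = M * Λ (M⁻¹ *ᵥ y) * Mᵀ) :
    (∀ i j, Differentiable ℝ fun y => σ y i j) ∧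
      (∀ y, IsUnit (σ y)) ∧
      CurlCondition σ :=
  conjugated_diagonal_satisfies_curl_condition_general d M hM f hf_diff hf_pos Λ hΛ σ hσ
end

section
/- Let d ≥ 1 and let σ : ℝ^d → ℝ^{d×d} be differentiable such that σ(y) is a symmetric positive definite matrix for every y ∈ ℝ^d, and suppose σ satisfies the curl condition. Then there exists a convex differentiable function φ : ℝ^d → ℝ whose gradient ∇φ : ℝ^d → ℝ^d is differentiable everywhere and satisfies D(∇φ)(y) = σ(y)^{-1} for all y ∈ ℝ^d; that is, σ^{-1} is the Hessian of a convex function. -/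
open Matrix

/-!
Since `σ` is symmetric positive definite, `A = σ⁻¹` is differentiable and symmetric, and
differentiating `σ σ⁻¹ = 1` gives `∂ₖA = -A (∂ₖσ) A`; the curl condition says exactly that
`∂ₖA eⱼ = ∂ⱼA eₖ`. So every row of `A` has a symmetric Jacobian and is the gradient of a potential
`gᵢ`; the field `g = (gᵢ)` then has the symmetric Jacobian `A`, so it is the gradient of a potential
`φ`, whose Hessian `A` is positive definite, hence `φ` is convex.

The potentials are line integrals along axis-parallel paths. Green's theorem on coordinate
rectangles, which needs differentiability but no continuity of the derivative, shows that their
partial derivatives are the prescribed continuous functions, so they are Fréchet differentiable.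
-/
open Filter Asymptotics Function Topology MeasureTheory intervalIntegral

section Splice

variable {d : ℕ}

def splice (m : ℕ) (y p : Fin d → ℝ) : Fin d → ℝ := fun i => if (i : ℕ) < m then y i else p i

@[simp] lemma splice_zero (y p : Fin d → ℝ) : splice 0 y p = p := by
  funext i; simp [splice]

lemma splice_of_le {m : ℕ} (hm : d ≤ m) (y p : Fin d → ℝ) : splice m y p = y := by
  funext i; simp [splice, i.isLt.trans_le hm]

@[simp] lemma splice_self (m : ℕ) (p : Fin d → ℝ) : splice m p p = p := by
  funext i; simp [splice]

lemma update_splice_self (j : Fin d) (y p : Fin d → ℝ) :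
    update (splice j y p) j (y j) = splice (j + 1) y p := by
  funext i
  rcases eq_or_ne i j with rfl | hij
  · simp [splice]
  · simp only [update_of_ne hij, splice]
    grind

lemma update_splice_apply_self (j : Fin d) (y p : Fin d → ℝ) :
    update (splice j y p) j (p j) = splice j y p := by
  simp [splice]

lemma sub_eq_sum_sub_splice {F : Type*} [AddCommGroup F] (f : (Fin d → ℝ) → F)
    (y p : Fin d → ℝ) :
    f y - f p = ∑ j : Fin d, (f (splice (j + 1) y p) - f (splice j y p)) := by
  rw [Fin.sum_univ_eq_sum_range (fun m => f (splice (m + 1) y p) - f (splice m y p)),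
    Finset.sum_range_sub (fun m => f (splice m y p)), splice_of_le le_rfl, splice_zero]

end Splice

lemma isLittleO_sub_sub_of_hasDerivAt {α : Type*} {l : Filter α} {F F' : α → ℝ → ℝ}
    {u c : ℝ} {v : α → ℝ} (hv : Tendsto v l (𝓝 u)) (hF : ∀ a s, HasDerivAt (F a) (F' a s) s)
    (hF' : Tendsto ↿F' (l ×ˢ 𝓝 u) (𝓝 c)) :
    (fun a => F a (v a) - F a u - c * (v a - u)) =o[l] fun a => v a - u := by
  rw [isLittleO_iff]
  intro ε hε
  have hclose : ∀ᶠ a in l, ∀ s ∈ segment ℝ u (v a), ‖F' a s - c‖ ≤ ε :=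
    Eventually.segment_of_prod_nhds tendsto_const_nhds hv
      ((Metric.tendsto_nhds.mp hF' ε hε).mono fun q hq => (dist_eq_norm _ c ▸ hq).le)
  filter_upwards [hclose] with a ha
  have := (convex_segment u (v a)).norm_image_sub_le_of_norm_hasDerivWithin_le
    (f := fun s => F a s - c * s)
    (fun s _ => ((hF a s).sub ((hasDerivAt_id s).const_mul c)).hasDerivWithinAt)
    (fun s hs => by simpa using ha s hs) (left_mem_segment ..) (right_mem_segment ..)
  calc ‖F a (v a) - F a u - c * (v a - u)‖ = ‖F a (v a) - c * v a - (F a u - c * u)‖ := by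
        ring_nf
    _ ≤ ε * ‖v a - u‖ := this

theorem hasFDerivAt_of_hasDerivAt_update {d : ℕ} {f : (Fin d → ℝ) → ℝ}
    {g : Fin d → (Fin d → ℝ) → ℝ} (hg : ∀ j, Continuous (g j))
    (hf : ∀ y j, HasDerivAt (fun s => f (update y j s)) (g j y) (y j)) (p : Fin d → ℝ) :
    HasFDerivAt f (∑ j, g j p • (ContinuousLinearMap.proj j : (Fin d → ℝ) →L[ℝ] ℝ)) p := by
  rw [hasFDerivAt_iff_isLittleO]
  have hterm : ∀ j : Fin d, (fun y => f (splice (j + 1) y p) - f (splice j y p)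
      - g j p * (y j - p j)) =o[𝓝 p] fun y => y - p := by
    intro j
    have hcont : Continuous fun q : (Fin d → ℝ) × ℝ => update (splice j q.1 p) j q.2 := by
      refine Continuous.update (continuous_pi fun i => ?_) j continuous_snd
      simp only [splice]; split_ifs
      exacts [(continuous_apply i).comp continuous_fst, continuous_const]
    have key := isLittleO_sub_sub_of_hasDerivAt (l := 𝓝 p) (c := g j p)
      ((continuous_apply j).tendsto p)
      (F := fun y s => f (update (splice j y p) j s))
      (F' := fun y s => g j (update (splice j y p) j s))
      (fun y s => by simpa using hf (update (splice j y p) j s) j)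
      (by rw [← nhds_prod_eq]; exact ((hg j).comp hcont).tendsto' (p, p j) _ (by simp))
    have hproj := (ContinuousLinearMap.proj j : (Fin d → ℝ) →L[ℝ] ℝ).isBigO_sub (𝓝 p) p
    refine (key.trans_isBigO hproj).congr_left fun y => ?_
    simp [update_splice_self, update_splice_apply_self]
  refine (IsLittleO.fun_sum (s := Finset.univ) fun j _ => hterm j).congr_left fun y => ?_
  simp only [_root_.sum_apply, _root_.smul_apply,
    ContinuousLinearMap.proj_apply, Pi.sub_apply, smul_eq_mul, sub_eq_sum_sub_splice f y p,
    Finset.sum_sub_distrib]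

theorem integral_sub_integral_eq_of_fderiv_symm {E F : Type*} [NormedAddCommGroup E]
    [NormedSpace ℝ E] [NormedAddCommGroup F] [NormedSpace ℝ F] [CompleteSpace F]
    {v₁ v₂ : E → F} (h₁ : Differentiable ℝ v₁) (h₂ : Differentiable ℝ v₂) {e₁ e₂ : E}
    (hsymm : ∀ x, fderiv ℝ v₁ x e₂ = fderiv ℝ v₂ x e₁) (w : E) (a₀ a₁ b₀ b₁ : ℝ) :
    (∫ t in b₀..b₁, v₂ (w + a₁ • e₁ + t • e₂)) - ∫ t in b₀..b₁, v₂ (w + a₀ • e₁ + t • e₂) =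
      (∫ u in a₀..a₁, v₁ (w + u • e₁ + b₁ • e₂)) - ∫ u in a₀..a₁, v₁ (w + u • e₁ + b₀ • e₂) := by
  set L : ℝ × ℝ →L[ℝ] E := (ContinuousLinearMap.fst ℝ ℝ ℝ).smulRight e₁ +
    (ContinuousLinearMap.snd ℝ ℝ ℝ).smulRight e₂
  have hemb : ∀ q : ℝ × ℝ, w + q.1 • e₁ + q.2 • e₂ = w + L q := fun q => by
    simp [L, add_assoc]
  have hL : ∀ q : ℝ × ℝ, HasFDerivAt (fun q : ℝ × ℝ => w + q.1 • e₁ + q.2 • e₂) L q := by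
    intro q
    simp_rw [hemb]
    exact L.hasFDerivAt.const_add w
  have hc : Continuous fun q : ℝ × ℝ => w + q.1 • e₁ + q.2 • e₂ := by fun_prop
  have hgreen := integral2_divergence_prod_of_hasFDerivAt_off_countable
    (fun q => v₂ (w + q.1 • e₁ + q.2 • e₂)) (fun q => -v₁ (w + q.1 • e₁ + q.2 • e₂))
    (fun q => (fderiv ℝ v₂ _).comp L) (fun q => -(fderiv ℝ v₁ _).comp L)
    a₀ b₀ a₁ b₁ ∅ Set.countable_empty
    (h₂.continuous.comp hc).continuousOn (h₁.continuous.comp hc).neg.continuousOn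
    (fun q _ => (h₂ _).hasFDerivAt.comp q (hL q))
    (fun q _ => ((h₁ _).hasFDerivAt.comp q (hL q)).neg)
    (by simp [L, hsymm])
  simp only [ContinuousLinearMap.comp_apply, _root_.neg_apply, L, hsymm, _root_.add_apply,
    ContinuousLinearMap.smulRight_apply, ContinuousLinearMap.coe_fst',
    ContinuousLinearMap.coe_snd', one_smul, zero_smul, add_zero, zero_add, add_neg_cancel,
    intervalIntegral.integral_zero, intervalIntegral.integral_neg] at hgreen
  rw [← sub_eq_zero, hgreen]
  abel

section AxisPotential

variable {d : ℕ}

lemma splice_update_of_le {k : ℕ} {j : Fin d} (h : k ≤ j) (y p : Fin d → ℝ) (s : ℝ) :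
    splice k (update y j s) p = splice k y p := by
  funext i
  simp only [splice]
  split_ifs with hi
  · exact update_of_ne (fun hij : i = j => by rw [hij] at hi; omega) s y
  · rfl

/-- `axisPotential v y` integrates `v` along the axis-parallel path from `0` to `y` through the
points `splice k y 0`; `axisTerm v k y` is its leg in direction `k`. -/
noncomputable def axisTerm (v : Fin d → (Fin d → ℝ) → ℝ) (k : Fin d) (y : Fin d → ℝ) : ℝ :=
  ∫ t in (0 : ℝ)..y k, v k (update (splice k y 0) k t)

noncomputable def axisPotential (v : Fin d → (Fin d → ℝ) → ℝ) (y : Fin d → ℝ) : ℝ :=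
  ∑ k, axisTerm v k y

variable {v : Fin d → (Fin d → ℝ) → ℝ}

lemma axisTerm_update_of_lt {j k : Fin d} (hkj : k < j) (y : Fin d → ℝ) (s : ℝ) :
    axisTerm v k (update y j s) = axisTerm v k y := by
  simp [axisTerm, update_of_ne hkj.ne, splice_update_of_le (Fin.le_def.mp hkj.le)]

lemma axisTerm_update_self_sub {k : Fin d} (hv : Continuous (v k)) (y : Fin d → ℝ) (s : ℝ) :
    axisTerm v k (update y k s) - axisTerm v k y
      = ∫ u in y k..s, v k (splice (k + 1) (update y k u) 0) := by
  have hslice : ∀ u, splice (k + 1) (update y k u) 0 = update (splice k y 0) k u := by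
    intro u
    rw [← update_splice_self, splice_update_of_le le_rfl, update_self]
  have hcont : Continuous fun t => v k (update (splice k y 0) k t) :=
    hv.comp (continuous_const.update k continuous_id)
  simp only [axisTerm, update_self, splice_update_of_le le_rfl, hslice]
  exact integral_interval_sub_left (hcont.intervalIntegrable _ _) (hcont.intervalIntegrable _ _)

lemma axisTerm_update_sub_of_lt (hv : ∀ j, Differentiable ℝ (v j))
    (hsymm : ∀ y j k, fderiv ℝ (v j) y (Pi.single k 1) = fderiv ℝ (v k) y (Pi.single j 1))
    {j k : Fin d} (hjk : j < k) (y : Fin d → ℝ) (s : ℝ) :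
    axisTerm v k (update y j s) - axisTerm v k y
      = (∫ u in y j..s, v j (splice (k + 1) (update y j u) 0))
        - ∫ u in y j..s, v j (splice k (update y j u) 0) := by
  set w := update (splice k y 0) j 0
  have hpt : ∀ u t, w + u • Pi.single j 1 + t • Pi.single k 1
      = update (splice k (update y j u) 0) k t := by
    intro u t
    funext i
    have := Fin.lt_def.mp hjk
    simp only [w, splice, Pi.add_apply, Pi.smul_apply, Pi.single_apply, update_apply, smul_eq_mul]
    split_ifs <;> simp_all
  have htop : ∀ u, splice (k + 1) (update y j u) 0
      = w + u • Pi.single j 1 + y k • Pi.single k 1 :=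
    fun u => by rw [hpt, ← update_splice_self, update_of_ne hjk.ne']
  have hbot : ∀ u, splice k (update y j u) 0 = w + u • Pi.single j 1 + (0 : ℝ) • Pi.single k 1 :=
    fun u => by rw [hpt]; exact (update_splice_apply_self k _ 0).symm
  have hleft : ∀ t, update (splice k y 0) k t = w + y j • Pi.single j 1 + t • Pi.single k 1 :=
    fun t => by rw [hpt, update_eq_self]
  simp only [axisTerm, update_of_ne hjk.ne', ← hpt]
  simp only [htop, hbot, hleft]
  exact integral_sub_integral_eq_of_fderiv_symm (hv j) (hv k) (hsymm · j k) w (y j) s 0 (y k)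

theorem axisPotential_update_sub (hv : ∀ j, Differentiable ℝ (v j))
    (hsymm : ∀ y j k, fderiv ℝ (v j) y (Pi.single k 1) = fderiv ℝ (v k) y (Pi.single j 1))
    (y : Fin d → ℝ) (j : Fin d) (s : ℝ) :
    axisPotential v (update y j s) - axisPotential v y = ∫ u in y j..s, v j (update y j u) := by
  -- the `k`-th term moves by `c (k + 1) - c k`, so the sum telescopes
  set c : ℕ → ℝ := fun m =>
    if (j : ℕ) < m then ∫ u in y j..s, v j (splice m (update y j u) 0) else 0
  have hterm : ∀ k : Fin d, axisTerm v k (update y j s) - axisTerm v k y = c (k + 1) - c k := by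
    intro k
    have := Fin.lt_def (a := k) (b := j)
    rcases lt_trichotomy k j with hkj | rfl | hjk
    all_goals simp only [c]
    · rw [axisTerm_update_of_lt hkj, sub_self, if_neg (by omega), if_neg (by omega), sub_self]
    · rw [axisTerm_update_self_sub (hv k).continuous, if_pos (by omega), if_neg (lt_irrefl _),
        sub_zero]
    · rw [axisTerm_update_sub_of_lt hv hsymm hjk, if_pos (by omega), if_pos (by omega)]
  rw [axisPotential, axisPotential, ← Finset.sum_sub_distrib,
    Finset.sum_congr rfl fun k _ => hterm k,
    Fin.sum_univ_eq_sum_range (fun m => c (m + 1) - c m), Finset.sum_range_sub]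
  simp [c, splice_of_le le_rfl]

theorem hasFDerivAt_axisPotential (hv : ∀ j, Differentiable ℝ (v j))
    (hsymm : ∀ y j k, fderiv ℝ (v j) y (Pi.single k 1) = fderiv ℝ (v k) y (Pi.single j 1))
    (y : Fin d → ℝ) :
    HasFDerivAt (axisPotential v)
      (∑ j, v j y • (ContinuousLinearMap.proj j : (Fin d → ℝ) →L[ℝ] ℝ)) y := by
  refine hasFDerivAt_of_hasDerivAt_update (fun j => (hv j).continuous) (fun x j => ?_) y
  have hline : (fun s => axisPotential v (update x j s))
      = fun s => axisPotential v x + ∫ u in x j..s, v j (update x j u) := by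
    funext s
    rw [← axisPotential_update_sub hv hsymm, add_sub_cancel]
  have hcont : Continuous fun u => v j (update x j u) :=
    (hv j).continuous.comp (continuous_const.update j continuous_id)
  rw [hline]
  simpa using (hcont.integral_hasStrictDerivAt (x j) (x j)).hasDerivAt.const_add
    (axisPotential v x)

end AxisPotential

theorem convexOn_univ_of_hasFDerivAt2_nonneg {E : Type*} [NormedAddCommGroup E]
    [NormedSpace ℝ E] {f : E → ℝ} {f' : E → E →L[ℝ] ℝ} {f'' : E → E →L[ℝ] E →L[ℝ] ℝ}
    (hf : ∀ x, HasFDerivAt f (f' x) x) (hf' : ∀ x, HasFDerivAt f' (f'' x) x)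
    (hf'' : ∀ x v, 0 ≤ f'' x v v) : ConvexOn ℝ Set.univ f := by
  refine ⟨convex_univ, fun x _ z _ a b ha hb hab => ?_⟩
  set ℓ : ℝ → E := fun t => x + t • (z - x)
  have hℓ : ∀ t, HasDerivAt ℓ (z - x) t := fun t =>
    (((hasDerivAt_id t).smul_const (z - x)).const_add x).congr_deriv (one_smul ℝ _)
  have hline : ConvexOn ℝ Set.univ (f ∘ ℓ) := by
    refine convexOn_of_hasDerivWithinAt2_nonneg convex_univ
      (f' := fun t => f' (ℓ t) (z - x)) (f'' := fun t => f'' (ℓ t) (z - x) (z - x))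
      ?_ (fun t _ => ?_) (fun t _ => ?_) (fun t _ => hf'' _ _)
    · exact (continuous_iff_continuousAt.mpr fun t =>
        ((hf (ℓ t)).comp_hasDerivAt t (hℓ t)).continuousAt).continuousOn
    · exact ((hf (ℓ t)).comp_hasDerivAt t (hℓ t)).hasDerivWithinAt
    · refine HasDerivAt.hasDerivWithinAt ?_
      exact (((hf' (ℓ t)).comp_hasDerivAt t (hℓ t)).clm_apply
        (hasDerivAt_const t (z - x))).congr_deriv (by simp)
  have h := hline.2 (Set.mem_univ 0) (Set.mem_univ 1) ha hb hab
  have hpt : a • x + b • z = ℓ b := by simp only [ℓ, show a = 1 - b by linarith]; module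
  simp only [Function.comp_apply, smul_eq_mul, mul_zero, mul_one, zero_add, ℓ, zero_smul,
    add_zero, one_smul, add_sub_cancel] at h
  rwa [hpt]

section MatrixCalculus

variable {𝕜 E n : Type*} [NontriviallyNormedField 𝕜] [NormedAddCommGroup E] [NormedSpace 𝕜 E]
  [Fintype n] [DecidableEq n]

theorem differentiable_det {f : E → Matrix n n 𝕜} (hf : ∀ i j, Differentiable 𝕜 (f · i j)) :
    Differentiable 𝕜 fun y => (f y).det := by
  simp only [Matrix.det_apply']
  refine Differentiable.fun_sum fun τ _ => Differentiable.const_mul ?_ _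
  exact fun y => (HasFDerivAt.finsetProd fun i _ => (hf (τ i) i y).hasFDerivAt).differentiableAt

theorem differentiable_inv_apply {f : E → Matrix n n 𝕜}
    (hf : ∀ i j, Differentiable 𝕜 (f · i j)) (hdet : ∀ y, IsUnit (f y).det) (i j : n) :
    Differentiable 𝕜 fun y => (f y)⁻¹ i j := by
  simp only [Matrix.inv_def, Matrix.smul_apply, smul_eq_mul, Ring.inverse_eq_inv,
    Matrix.adjugate_apply]
  refine ((differentiable_det hf).inv fun y => (hdet y).ne_zero).mul (differentiable_det ?_)
  intro a b
  by_cases ha : a = j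
  · simp [ha]
  · simpa [Matrix.updateRow_ne ha] using hf a b

end MatrixCalculus

section MatPartialDeriv

variable {d : ℕ}

lemma matPartialDeriv_mul {A B : (Fin d → ℝ) → Matrix (Fin d) (Fin d) ℝ} {y : Fin d → ℝ}
    (hA : ∀ i j, DifferentiableAt ℝ (A · i j) y) (hB : ∀ i j, DifferentiableAt ℝ (B · i j) y)
    (k : Fin d) :
    matPartialDeriv (fun y => A y * B y) y k
      = matPartialDeriv A y k * B y + A y * matPartialDeriv B y k := by
  ext i j
  simp only [matPartialDeriv, Matrix.of_apply, Matrix.mul_apply, Matrix.add_apply,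
    ← Finset.sum_add_distrib]
  have hsum : HasFDerivAt (fun y => ∑ l, A y i l * B y l j)
      (∑ l, (A y i l • fderiv ℝ (B · l j) y + B y l j • fderiv ℝ (A · i l) y)) y :=
    HasFDerivAt.fun_sum fun l _ => (hA i l).hasFDerivAt.mul (hB l j).hasFDerivAt
  simp [hsum.fderiv, add_comm, mul_comm]

lemma matPartialDeriv_inv {σ : (Fin d → ℝ) → Matrix (Fin d) (Fin d) ℝ}
    (hσ : ∀ i j, Differentiable ℝ (σ · i j)) (hdet : ∀ y, IsUnit (σ y).det)
    (y : Fin d → ℝ) (k : Fin d) :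
    matPartialDeriv (fun y => (σ y)⁻¹) y k = -((σ y)⁻¹ * matPartialDeriv σ y k * (σ y)⁻¹) := by
  have hprod := matPartialDeriv_mul (A := σ) (B := fun y => (σ y)⁻¹) (fun i j => hσ i j y)
    (fun i j => differentiable_inv_apply hσ hdet i j y) k
  have hconst : matPartialDeriv (fun y => σ y * (σ y)⁻¹) y k = 0 := by
    simp_rw [Matrix.mul_nonsing_inv _ (hdet _)]
    ext
    simp [matPartialDeriv]
  rw [hconst, eq_comm, add_eq_zero_iff_eq_neg'] at hprod
  calc matPartialDeriv (fun y => (σ y)⁻¹) y k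
      = (σ y)⁻¹ * (σ y * matPartialDeriv (fun y => (σ y)⁻¹) y k) := by
        rw [← Matrix.mul_assoc, Matrix.nonsing_inv_mul _ (hdet y), Matrix.one_mul]
    _ = -((σ y)⁻¹ * matPartialDeriv σ y k * (σ y)⁻¹) := by
        rw [hprod, Matrix.mul_neg, Matrix.mul_assoc]

theorem CurlCondition.fderiv_inv_apply_comm {σ : (Fin d → ℝ) → Matrix (Fin d) (Fin d) ℝ}
    (hcurl : CurlCondition σ) (hσ : ∀ i j, Differentiable ℝ (σ · i j))
    (hdet : ∀ y, IsUnit (σ y).det) (y : Fin d → ℝ) (i j k : Fin d) :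
    fderiv ℝ (fun y => (σ y)⁻¹ i j) y (Pi.single k 1)
      = fderiv ℝ (fun y => (σ y)⁻¹ i k) y (Pi.single j 1) := by
  have h : ∀ j k, fderiv ℝ (fun y => (σ y)⁻¹ i j) y (Pi.single k 1)
      = -((σ y)⁻¹ *ᵥ ((matPartialDeriv σ y k * (σ y)⁻¹) *ᵥ Pi.single j 1)) i := fun j k => by
    rw [Matrix.mulVec_mulVec, Matrix.mulVec_single_one, Matrix.col_apply, ← Matrix.mul_assoc,
      ← Matrix.neg_apply, ← matPartialDeriv_inv hσ hdet]
    rfl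
  rw [h, h, hcurl y j k]

end MatPartialDeriv

theorem inv_hessian_of_curl_condition_general (d : ℕ)
    (σ : (Fin d → ℝ) → Matrix (Fin d) (Fin d) ℝ)
    (hσ_diff : ∀ i j, Differentiable ℝ fun y => σ y i j)
    (hσ_pd : ∀ y, (σ y).PosDef)
    (hcurl : CurlCondition σ) :
    ∃ (φ : (Fin d → ℝ) → ℝ) (gradφ : (Fin d → ℝ) → Fin d → ℝ),
      ConvexOn ℝ Set.univ φ ∧
      Differentiable ℝ φ ∧
      (∀ y i, gradφ y i = fderiv ℝ φ y (Pi.single i 1)) ∧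
      Differentiable ℝ gradφ ∧
      (∀ y i j, fderiv ℝ (fun y => gradφ y i) y (Pi.single j 1) = (σ y)⁻¹ i j) := by
  have hdet : ∀ y, IsUnit (σ y).det := fun y => (hσ_pd y).det_pos.ne'.isUnit
  set g : (Fin d → ℝ) → Fin d → ℝ := fun y i => axisPotential (fun j y => (σ y)⁻¹ i j) y
  have hg : ∀ i y, HasFDerivAt (g · i) (∑ j, (σ y)⁻¹ i j • ContinuousLinearMap.proj j) y :=
    fun i => hasFDerivAt_axisPotential (differentiable_inv_apply hσ_diff hdet i)
      (fun y j k => hcurl.fderiv_inv_apply_comm hσ_diff hdet y i j k)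
  have hg_apply : ∀ y i j, fderiv ℝ (g · i) y (Pi.single j 1) = (σ y)⁻¹ i j := by
    simp [(hg _ _).fderiv, Pi.single_apply]
  set φ := axisPotential fun i y => g y i
  have hφ : ∀ y, HasFDerivAt φ (∑ i, g y i • ContinuousLinearMap.proj i) y :=
    hasFDerivAt_axisPotential (fun i y => (hg i y).differentiableAt) fun y i k => by
      simpa [hg_apply] using ((hσ_pd y).inv.isHermitian.apply i k).symm
  have hconvex : ConvexOn ℝ Set.univ φ := by
    refine convexOn_univ_of_hasFDerivAt2_nonneg hφ
      (f'' := fun y => ∑ i, (∑ j, (σ y)⁻¹ i j • ContinuousLinearMap.proj j).smulRight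
        (ContinuousLinearMap.proj i))
      (fun y => HasFDerivAt.fun_sum fun i _ => (hg i y).smul_const
        (ContinuousLinearMap.proj i : (Fin d → ℝ) →L[ℝ] ℝ)) fun y v => ?_
    simpa [dotProduct, mulVec, Finset.mul_sum, mul_comm, mul_left_comm] using
      (hσ_pd y).inv.posSemidef.dotProduct_mulVec_nonneg v
  exact ⟨φ, g, hconvex, fun y => (hφ y).differentiableAt,
    fun y i => by simp [(hφ y).fderiv, Pi.single_apply],
    differentiable_pi.2 fun i y => (hg i y).differentiableAt, hg_apply⟩

/-- necessity direction of Lemma 1 (iv): if `σ : ℝ^d → ℝ^{d×d}` is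
differentiable, `σ(y)` is symmetric positive definite for every `y`, and `σ` satisfies
the curl condition, then there exists a convex differentiable function `φ : ℝ^d → ℝ`
whose gradient `∇φ` is differentiable everywhere with Jacobian `D(∇φ)(y) = σ(y)⁻¹`
for all `y`; that is, `σ⁻¹` is the Hessian of a convex function. -/
theorem inv_hessian_of_curl_condition (d : ℕ) (hd : 1 ≤ d)
    (σ : (Fin d → ℝ) → Matrix (Fin d) (Fin d) ℝ)
    (hσ_diff : ∀ i j, Differentiable ℝ fun y => σ y i j)
    (hσ_pd : ∀ y, (σ y).PosDef)
    (hcurl : CurlCondition σ) :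
    ∃ (φ : (Fin d → ℝ) → ℝ) (gradφ : (Fin d → ℝ) → Fin d → ℝ),
      ConvexOn ℝ Set.univ φ ∧
      Differentiable ℝ φ ∧
      (∀ y i, gradφ y i = fderiv ℝ φ y (Pi.single i 1)) ∧
      Differentiable ℝ gradφ ∧
      (∀ y i j, fderiv ℝ (fun y => gradφ y i) y (Pi.single j 1) = (σ y)⁻¹ i j) :=
  inv_hessian_of_curl_condition_general d σ hσ_diff hσ_pd hcurl
end

section
/- Let d ≥ 1 and let σ : ℝ^d → ℝ^{d×d} be continuously differentiable with σ(y) invertible for every y ∈ ℝ^d, and suppose σ satisfies the curl condition. Then there exists a continuously differentiable map g : ℝ^d → ℝ^d whose Jacobian matrix satisfies Dg(y) = σ(y)^{-1} for every y ∈ ℝ^d. -/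
open Matrix

/-!
Read `y ↦ σ(y)⁻¹` as a 1-form `ω` with values in `ℝ^d`. Differentiating `σ σ⁻¹ = 1` gives
`∂ₖ(σ⁻¹) = -σ⁻¹ (∂ₖσ) σ⁻¹`, so the curl condition says precisely that the bilinear map `dω(y)`
is symmetric on basis vectors, hence symmetric: `ω` is closed. On the convex set `ℝ^d` the
Poincaré lemma (`Convex.exists_forall_hasFDerivAt_of_fderiv_symmetric`) gives `g` with `dg = ω`,
and `g` is `C¹` because `ω` is continuous.
-/

open scoped Matrix.Norms.Elementwise

section

variable {ι : Type*} [Fintype ι] {E : Type*} [NormedAddCommGroup E] [NormedSpace ℝ E]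

theorem fderiv_matrix_apply {σ : E → Matrix ι ι ℝ} {y : E} (hσ : DifferentiableAt ℝ σ y)
    (v : E) (i l : ι) : fderiv ℝ σ y v i l = fderiv ℝ (fun y => σ y i l) y v := by
  rw [(hasFDerivAt_pi'.1 (hasFDerivAt_pi'.1 hσ.hasFDerivAt i) l).fderiv]
  rfl

end

variable {ι : Type*} [Fintype ι] [DecidableEq ι]

theorem ContinuousLinearMap.apply_apply_comm_of_pi_single {F : Type*} [NormedAddCommGroup F]
    [NormedSpace ℝ F] (B : (ι → ℝ) →L[ℝ] (ι → ℝ) →L[ℝ] F)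
    (h : ∀ j k, B (Pi.single j 1) (Pi.single k 1) = B (Pi.single k 1) (Pi.single j 1))
    (x y : ι → ℝ) : B x y = B y x := by
  rw [pi_eq_sum_univ' x, pi_eq_sum_univ' y]
  simp only [map_sum, map_smul, _root_.sum_apply, _root_.smul_apply, Finset.smul_sum, smul_smul]
  rw [Finset.sum_comm]
  exact Finset.sum_congr rfl fun j _ => Finset.sum_congr rfl fun k _ => by rw [mul_comm, h]

namespace Matrix

noncomputable def toCLM' : Matrix ι ι ℝ ≃ₐ[ℝ] ((ι → ℝ) →L[ℝ] (ι → ℝ)) :=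
  toLinAlgEquiv'.trans (Module.End.toContinuousLinearMap (ι → ℝ))

@[simp]
theorem toCLM'_apply (A : Matrix ι ι ℝ) (v : ι → ℝ) : toCLM' A v = A *ᵥ v := rfl

theorem toCLM'_nonsing_inv {A : Matrix ι ι ℝ} (hA : IsUnit A) :
    toCLM' A⁻¹ = Ring.inverse (toCLM' A) := by
  obtain ⟨u, rfl⟩ := hA
  let f : Matrix ι ι ℝ →* ((ι → ℝ) →L[ℝ] (ι → ℝ)) := (toCLM' : Matrix ι ι ℝ ≃ₐ[ℝ] _).toMonoidHom
  have hu : toCLM' (u : Matrix ι ι ℝ) = (Units.map f u : (ι → ℝ) →L[ℝ] (ι → ℝ)) := rfl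
  rw [nonsing_inv_eq_ringInverse, Ring.inverse_unit, hu, Ring.inverse_unit, Units.coe_map_inv]
  rfl

theorem toCLM'_nonsing_inv_comp {X : Type*} {σ : X → Matrix ι ι ℝ} (hσ : ∀ y, IsUnit (σ y)) :
    (fun y => toCLM' (σ y)⁻¹) = Ring.inverse ∘ fun y => toCLM' (σ y) :=
  funext fun y => toCLM'_nonsing_inv (hσ y)

end Matrix

variable {E : Type*} [NormedAddCommGroup E] [NormedSpace ℝ E]

theorem ContDiff.toCLM'_nonsing_inv {σ : E → Matrix ι ι ℝ} {n : WithTop ℕ∞}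
    (hσ : ContDiff ℝ n σ) (hunit : ∀ y, IsUnit (σ y)) :
    ContDiff ℝ n fun y => toCLM' (σ y)⁻¹ := by
  rw [toCLM'_nonsing_inv_comp hunit, contDiff_iff_contDiffAt]
  intro y
  have hσ' : ContDiff ℝ n fun y => toCLM' (σ y) :=
    (LinearMap.toContinuousLinearMap (toCLM' : Matrix ι ι ℝ ≃ₐ[ℝ] _).toLinearMap).contDiff.comp hσ
  exact (contDiffAt_ringInverse ℝ ((hunit y).map toCLM').unit).comp y hσ'.contDiffAt

theorem fderiv_toCLM'_nonsing_inv_apply {σ : E → Matrix ι ι ℝ} {a : E}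
    (hσ : DifferentiableAt ℝ σ a) (hunit : ∀ y, IsUnit (σ y)) (v : E) :
    fderiv ℝ (fun y => toCLM' (σ y)⁻¹) a v = -toCLM' ((σ a)⁻¹ * fderiv ℝ σ a v * (σ a)⁻¹) := by
  have hσ' : HasFDerivAt (fun y => toCLM' (σ y)) _ a :=
    (LinearMap.toContinuousLinearMap (toCLM' : Matrix ι ι ℝ ≃ₐ[ℝ] _).toLinearMap).hasFDerivAt.comp
      a hσ.hasFDerivAt
  have hinv := (hasFDerivAt_ringInverse (𝕜 := ℝ) ((hunit a).map toCLM').unit).comp a hσ'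
  rw [toCLM'_nonsing_inv_comp hunit, hinv.fderiv]
  simp only [ContinuousLinearMap.neg_comp, _root_.neg_apply, ContinuousLinearMap.comp_apply,
    ContinuousLinearMap.mulLeftRight_apply, map_mul, toCLM'_nonsing_inv (hunit a),
    Ring.inverse_of_isUnit ((hunit a).map toCLM')]
  rfl

theorem CurlCondition.fderiv_toCLM'_nonsing_inv_comm {d : ℕ}
    {σ : (Fin d → ℝ) → Matrix (Fin d) (Fin d) ℝ} (hcurl : CurlCondition σ)
    (hσ : Differentiable ℝ σ) (hunit : ∀ y, IsUnit (σ y)) (a x y : Fin d → ℝ) :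
    fderiv ℝ (fun y => toCLM' (σ y)⁻¹) a x y = fderiv ℝ (fun y => toCLM' (σ y)⁻¹) a y x := by
  refine ContinuousLinearMap.apply_apply_comm_of_pi_single _ (fun j k => ?_) x y
  have hpartial : ∀ k, fderiv ℝ σ a (Pi.single k 1) = matPartialDeriv σ a k := fun k => by
    ext i l
    exact fderiv_matrix_apply (hσ a) _ i l
  simp only [fderiv_toCLM'_nonsing_inv_apply (hσ a) hunit, hpartial,
    _root_.neg_apply, toCLM'_apply, Matrix.mul_assoc]
  rw [← mulVec_mulVec (Pi.single j 1), hcurl a j k, mulVec_mulVec]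

theorem exists_contDiff_hasFDerivAt_toCLM'_nonsing_inv {d : ℕ}
    {σ : (Fin d → ℝ) → Matrix (Fin d) (Fin d) ℝ} (hσ : ContDiff ℝ 1 σ)
    (hunit : ∀ y, IsUnit (σ y)) (hcurl : CurlCondition σ) :
    ∃ g : (Fin d → ℝ) → (Fin d → ℝ), ContDiff ℝ 1 g ∧ ∀ y, HasFDerivAt g (toCLM' (σ y)⁻¹) y := by
  have hω := hσ.toCLM'_nonsing_inv hunit
  obtain ⟨g, hg⟩ := convex_univ.exists_forall_hasFDerivAt_of_fderiv_symmetric isOpen_univ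
    (hω.differentiable one_ne_zero).differentiableOn
    fun a _ => hcurl.fderiv_toCLM'_nonsing_inv_comm (hσ.differentiable one_ne_zero) hunit a
  have hDg : fderiv ℝ g = fun y => toCLM' (σ y)⁻¹ := funext fun y => (hg y trivial).fderiv
  refine ⟨g, contDiff_one_iff_fderiv.2 ⟨fun y => (hg y trivial).differentiableAt, ?_⟩,
    fun y => hg y trivial⟩
  exact hDg ▸ hω.continuous

theorem exists_lamperti_transform_general (d : ℕ)
    (σ : (Fin d → ℝ) → Matrix (Fin d) (Fin d) ℝ)
    (hσ_c1 : ∀ i j, ContDiff ℝ 1 fun y => σ y i j)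
    (hσ_inv : ∀ y, IsUnit (σ y))
    (hcurl : CurlCondition σ) :
    ∃ g : (Fin d → ℝ) → (Fin d → ℝ),
      ContDiff ℝ 1 g ∧
      ∀ y i j, fderiv ℝ (fun y => g y i) y (Pi.single j 1) = (σ y)⁻¹ i j := by
  obtain ⟨g, hg, hDg⟩ := exists_contDiff_hasFDerivAt_toCLM'_nonsing_inv
    (contDiff_pi.2 fun i => contDiff_pi.2 fun j => hσ_c1 i j) hσ_inv hcurl
  refine ⟨g, hg, fun y i j => ?_⟩
  rw [(hasFDerivAt_pi'.1 (hDg y) i).fderiv]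
  simp

/-- Poincaré-lemma-type existence of the Lamperti transform:
if `σ : ℝ^d → ℝ^{d×d}` is continuously differentiable with `σ(y)` invertible for
every `y`, and `σ` satisfies the curl condition, then there exists a continuously
differentiable map `g : ℝ^d → ℝ^d` whose Jacobian matrix satisfies
`Dg(y) = σ(y)⁻¹` for every `y`. -/
theorem exists_lamperti_transform (d : ℕ) (hd : 1 ≤ d)
    (σ : (Fin d → ℝ) → Matrix (Fin d) (Fin d) ℝ)
    (hσ_c1 : ∀ i j, ContDiff ℝ 1 fun y => σ y i j)
    (hσ_inv : ∀ y, IsUnit (σ y))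
    (hcurl : CurlCondition σ) :
    ∃ g : (Fin d → ℝ) → (Fin d → ℝ),
      ContDiff ℝ 1 g ∧
      ∀ y i j, fderiv ℝ (fun y => g y i) y (Pi.single j 1) = (σ y)⁻¹ i j :=
  exists_lamperti_transform_general d σ hσ_c1 hσ_inv hcurl
end

section
/- Let n ≥ 1, let ν be a probability measure on ℝ^n whose characteristic function charFun(ν)(t) = ∫_{ℝ^n} exp(i⟨t, x⟩) dν(x) is nonzero for Lebesgue-almost every t ∈ ℝ^n, and let μ₁, μ₂ be finite measures on ℝ^n such that the convolutions μ₁ ∗ ν and μ₂ ∗ ν are equal. Then μ₁ = μ₂. -/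
open MeasureTheory

/-- The characteristic function `charFun(ν)(t) = ∫ exp(i⟨t,x⟩) dν(x)` of a measure `ν`
on `ℝ^n`, with `⟨t,x⟩ = ∑ i, t i * x i` the standard inner product. -/
noncomputable def charFunOfMeasure {n : ℕ} (ν : Measure (Fin n → ℝ)) (t : Fin n → ℝ) : ℂ :=
  ∫ x : Fin n → ℝ, Complex.exp (Complex.I * ((∑ i, t i * x i : ℝ) : ℂ)) ∂ν

/-!
Since `charFun (μ ∗ ν) = charFun μ * charFun ν`, the equality `μ₁ ∗ ν = μ₂ ∗ ν` forces
`charFun μ₁ = charFun μ₂` wherever `charFun ν` does not vanish, hence almost everywhere;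
both sides are continuous, so they agree everywhere, and a finite measure is determined by
its characteristic function. On `Fin n → ℝ` this is applied after transport to
`EuclideanSpace ℝ (Fin n)` by `toLp 2`, which preserves convolutions and Lebesgue measure.
-/

open WithLp

namespace MeasureTheory

variable {E : Type*} [NormedAddCommGroup E] [InnerProductSpace ℝ E] [CompleteSpace E]
  [SecondCountableTopology E] [MeasurableSpace E] [BorelSpace E]

theorem Measure.eq_of_conv_eq_conv_of_ae_charFun_ne_zero {μ₁ μ₂ ν : Measure E}
    [IsFiniteMeasure μ₁] [IsFiniteMeasure μ₂] [IsFiniteMeasure ν]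
    (ρ : Measure E) [ρ.IsOpenPosMeasure] (hν : ∀ᵐ t ∂ρ, charFun ν t ≠ 0)
    (h : μ₁ ∗ ν = μ₂ ∗ ν) : μ₁ = μ₂ := by
  refine Measure.ext_of_charFun <| (continuous_charFun.ae_eq_iff_eq ρ continuous_charFun).mp ?_
  filter_upwards [hν] with t ht
  refine mul_right_cancel₀ ht ?_
  rw [← charFun_conv, ← charFun_conv, h]

end MeasureTheory

theorem charFunOfMeasure_eq_charFun_map_toLp {n : ℕ} (μ : Measure (Fin n → ℝ))
    (t : Fin n → ℝ) : charFunOfMeasure μ t = charFun (μ.map (toLp 2)) (toLp 2 t) := by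
  rw [charFun_apply, integral_map (by fun_prop) (by fun_prop)]
  simp [charFunOfMeasure, PiLp.inner_apply, mul_comm]

theorem deconvolution_unique_general (n : ℕ)
    (ν : Measure (Fin n → ℝ)) [IsProbabilityMeasure ν]
    (hν : ∀ᵐ t : Fin n → ℝ ∂volume, charFunOfMeasure ν t ≠ 0)
    (μ₁ μ₂ : Measure (Fin n → ℝ)) [IsFiniteMeasure μ₁] [IsFiniteMeasure μ₂]
    (h : μ₁.conv ν = μ₂.conv ν) :
    μ₁ = μ₂ := by
  have map_toLp_conv (μ : Measure (Fin n → ℝ)) [SFinite μ] :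
      (μ ∗ ν).map (toLp 2) = μ.map (toLp 2) ∗ ν.map (toLp 2) :=
    Measure.map_conv_continuousLinearMap
      (PiLp.continuousLinearEquiv 2 ℝ _).symm.toContinuousLinearMap
  refine (MeasurableEquiv.toLp 2 (Fin n → ℝ)).map_measurableEquiv_injective <|
    Measure.eq_of_conv_eq_conv_of_ae_charFun_ne_zero (ν := ν.map (toLp 2)) volume ?_ ?_
  · filter_upwards [(PiLp.volume_preserving_ofLp (Fin n)).quasiMeasurePreserving.ae hν] with t ht
    simpa [charFunOfMeasure_eq_charFun_map_toLp] using ht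
  · simpa [MeasurableEquiv.coe_toLp, map_toLp_conv] using congrArg (Measure.map (toLp 2)) h

/-- deconvolution lemma: if `ν` is a probability measure on `ℝ^n`
whose characteristic function is nonzero for Lebesgue-almost every `t`, and `μ₁, μ₂`
are finite measures with `μ₁ ∗ ν = μ₂ ∗ ν` (convolution), then `μ₁ = μ₂`. -/
theorem deconvolution_unique (n : ℕ) (hn : 1 ≤ n)
    (ν : Measure (Fin n → ℝ)) [IsProbabilityMeasure ν]
    (hν : ∀ᵐ t : Fin n → ℝ ∂volume, charFunOfMeasure ν t ≠ 0)
    (μ₁ μ₂ : Measure (Fin n → ℝ)) [IsFiniteMeasure μ₁] [IsFiniteMeasure μ₂]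
    (h : μ₁.conv ν = μ₂.conv ν) :
    μ₁ = μ₂ :=
  deconvolution_unique_general n ν hν μ₁ μ₂ h
end
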